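/- Let D be a standard positive braid diagram on n strands whose closure is a knot, and run the roller-coaster algorithm starting at the top-left point with rightward orientation. If A denotes the set of crossings first encountered from above and B the set first encountered from below, then |A| - |B| = n - 1. -/

import Mathlib

/-- One positive crossing `σ_i`: the effect on a strand's position
(positions are numbered `1,…,n` from the top). -/
def stepPos (i p : ℕ) : ℕ := if p = i then i + 1 else if p = i + 1 then i else p

/-- Position at (left side of) time `k` of the strand entering the standard
diagram of the positive braid word `w` at position `j` on the left. -/
def posAt (w : List ℕ) (k j : ℕ) : ℕ := (w.take k).foldl (fun p i => stepPos i p) j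

/-- Starting position of the `t`-th pass through the braid when traversing the
closure starting at the top-left point (position `1`) with rightward
orientation. -/
def strandStart (w : List ℕ) (t : ℕ) : ℕ := (fun j => posAt w w.length j)^[t] 1

/-- Crossing `k` of the standard closed diagram of `w` is first encountered
from above: the pass along the overstrand of crossing `k` (the strand at
position `w.getD k 0`, which crosses over to position `w.getD k 0 + 1`)
occurs on an earlier pass than the pass along the understrand. -/
def firstFromAbove (w : List ℕ) (n k : ℕ) : Prop :=
  ∃ t t' : ℕ, t < n ∧ t' < n ∧
    posAt w k (strandStart w t) = w.getD k 0 ∧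
    posAt w k (strandStart w t') = w.getD k 0 + 1 ∧
    t < t'

/-!
Track the number of inversions among the `n` passes of the traversal: pairs of passes `t < t'`
such that pass `t'` runs above pass `t`. Crossing `k` swaps the two adjacent passes through it,
so the count goes up by one if the earlier of them is the overstrand (the crossing is first met
from above) and down by one otherwise; hence `|A| - |B|` is the total change of the count. The
passes enter the diagram at heights `strandStart w t` and leave it at `strandStart w (t + 1)`,
a rotation of the same sequence. Since the traversal starts at the top and returns there after
exactly `n` passes, this rotation creates precisely the `n - 1` inversions between the last pass
and all others.
-/

open Finset

def inversions (f : ℕ → ℕ) (S : Finset ℕ) : Finset (ℕ × ℕ) :=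
  {q ∈ S ×ˢ S | q.1 < q.2 ∧ f q.2 < f q.1}

section Inversions

variable {g : ℕ → ℕ} {S : Finset ℕ}

lemma card_inversions_comp_of_strictMono {e : ℕ → ℕ} (he : StrictMono e) :
    #(inversions (g ∘ e) S) = #(inversions g (S.image e)) := by
  have himage : inversions g (S.image e) = (inversions (g ∘ e) S).image (Prod.map e e) := by
    ext ⟨x, y⟩
    simp only [inversions, mem_filter, mem_product, mem_image, Prod.exists, Prod.map_apply,
      Prod.mk.injEq, Function.comp_apply]
    constructor
    · rintro ⟨⟨⟨a, ha, rfl⟩, b, hb, rfl⟩, hlt, hg⟩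
      exact ⟨a, b, ⟨⟨ha, hb⟩, he.lt_iff_lt.1 hlt, hg⟩, rfl, rfl⟩
    · rintro ⟨a, b, ⟨⟨ha, hb⟩, hlt, hg⟩, rfl, rfl⟩
      exact ⟨⟨⟨a, ha, rfl⟩, b, hb, rfl⟩, he hlt, hg⟩
  rw [himage, card_image_of_injective _ (he.injective.prodMap he.injective)]

lemma inversions_insert_of_forall_lt {m : ℕ} (h : ∀ x ∈ S, m < x ∧ g m < g x) :
    inversions g (insert m S) = inversions g S := by
  ext ⟨x, y⟩
  simp only [inversions, mem_filter, mem_product, mem_insert]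
  constructor
  · rintro ⟨⟨rfl | hx, rfl | hy⟩, hlt, hg⟩
    · omega
    · exact absurd hg (h y hy).2.not_gt
    · exact absurd hlt (h x hx).1.not_gt
    · exact ⟨⟨hx, hy⟩, hlt, hg⟩
  · rintro ⟨⟨hx, hy⟩, hlt, hg⟩
    exact ⟨⟨Or.inr hx, Or.inr hy⟩, hlt, hg⟩

lemma card_inversions_insert_of_forall_gt {m : ℕ} (h : ∀ x ∈ S, x < m ∧ g m < g x) :
    #(inversions g (insert m S)) = #(inversions g S) + #S := by
  have hsplit : inversions g (insert m S) = inversions g S ∪ S ×ˢ {m} := by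
    ext ⟨x, y⟩
    simp only [inversions, mem_filter, mem_product, mem_insert, mem_union, mem_singleton]
    constructor
    · rintro ⟨⟨rfl | hx, rfl | hy⟩, hlt, hg⟩
      · omega
      · exact absurd hlt (h y hy).1.not_gt
      · exact Or.inr ⟨hx, rfl⟩
      · exact Or.inl ⟨⟨hx, hy⟩, hlt, hg⟩
    · rintro (⟨⟨hx, hy⟩, hlt, hg⟩ | ⟨hx, rfl⟩)
      · exact ⟨⟨Or.inr hx, Or.inr hy⟩, hlt, hg⟩
      · exact ⟨⟨Or.inr hx, Or.inl rfl⟩, h x hx⟩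
  have hdisj : Disjoint (inversions g S) (S ×ˢ {m}) := by
    refine disjoint_left.2 fun ⟨x, y⟩ hq hq' => ?_
    simp only [inversions, mem_filter, mem_product, mem_singleton] at hq hq'
    have := h y hq.1.2
    omega
  rw [hsplit, card_union_of_disjoint hdisj, card_product, card_singleton, mul_one]

lemma card_inversions_rotate {n : ℕ} (hper : g n = g 0) (hmin : ∀ t ∈ Ico 1 n, g 0 < g t) :
    #(inversions (g ∘ (· + 1)) (range n)) = #(inversions g (range n)) + (n - 1) := by
  rcases n.eq_zero_or_pos with rfl | hn
  · simp [inversions]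
  have hfirst : range n = insert 0 (Ico 1 n) := by
    ext t; simp only [mem_range, mem_insert, mem_Ico]; omega
  have hlast : (range n).image (· + 1) = insert n (Ico 1 n) := by
    ext t; simp only [mem_image, mem_range, mem_insert, mem_Ico]
    exact ⟨by omega, fun ht => ⟨t - 1, by omega, by omega⟩⟩
  rw [card_inversions_comp_of_strictMono (fun a b (h : a < b) => Nat.succ_lt_succ h), hlast,
    card_inversions_insert_of_forall_gt, hfirst, inversions_insert_of_forall_lt, Nat.card_Ico]
  · exact fun t ht => ⟨(mem_Ico.1 ht).1, hmin t ht⟩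
  · exact fun t ht => ⟨(mem_Ico.1 ht).2, hper ▸ hmin t ht⟩

end Inversions

section StepPos

@[simp] lemma stepPos_self (i : ℕ) : stepPos i i = i + 1 := by simp [stepPos]

@[simp] lemma stepPos_add_one_self (i : ℕ) : stepPos i (i + 1) = i := by simp [stepPos]

lemma stepPos_stepPos (i p : ℕ) : stepPos i (stepPos i p) = p := by
  unfold stepPos; split_ifs <;> omega

lemma stepPos_injective (i : ℕ) : Function.Injective (stepPos i) :=
  Function.LeftInverse.injective (stepPos_stepPos i)

lemma stepPos_lt_stepPos_iff {i a b : ℕ} (h₁ : ¬(a = i ∧ b = i + 1))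
    (h₂ : ¬(a = i + 1 ∧ b = i)) :
    stepPos i a < stepPos i b ↔ a < b := by
  unfold stepPos; split_ifs <;> omega

lemma stepPos_mapsTo {n i : ℕ} (hi : 1 ≤ i ∧ i ≤ n - 1) :
    Set.MapsTo (stepPos i) (Set.Icc 1 n) (Set.Icc 1 n) := by
  intro p hp
  simp only [Set.mem_Icc] at hp ⊢
  unfold stepPos; split_ifs <;> omega

lemma inversions_stepPos_comp {f : ℕ → ℕ} {S : Finset ℕ} (hf : Set.InjOn f S) {a b i : ℕ}
    (ha : a ∈ S) (hb : b ∈ S) (hab : a < b) (hfa : f a = i) (hfb : f b = i + 1) :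
    inversions (stepPos i ∘ f) S = insert (a, b) (inversions f S) := by
  ext ⟨x, y⟩
  simp only [inversions, mem_insert, mem_filter, mem_product, Function.comp_apply, Prod.mk.injEq]
  by_cases hxy : x = a ∧ y = b
  · obtain ⟨rfl, rfl⟩ := hxy
    simp [hfa, hfb, ha, hb, hab]
  rw [or_iff_right hxy]
  refine and_congr_right fun ⟨hx, hy⟩ => and_congr_right fun hlt => stepPos_lt_stepPos_iff ?_ ?_
  · rintro ⟨hyi, hxi⟩
    have := hf hy ha (hyi.trans hfa.symm)
    have := hf hx hb (hxi.trans hfb.symm)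
    omega
  · rintro ⟨hyi, hxi⟩
    exact hxy ⟨hf hx ha (hxi.trans hfa.symm), hf hy hb (hyi.trans hfb.symm)⟩

lemma card_inversions_stepPos_comp {f : ℕ → ℕ} {S : Finset ℕ} (hf : Set.InjOn f S) {a b i : ℕ}
    (ha : a ∈ S) (hb : b ∈ S) (hab : a ≠ b) (hfa : f a = i) (hfb : f b = i + 1) :
    (#(inversions (stepPos i ∘ f) S) : ℤ) = #(inversions f S) + if a < b then 1 else -1 := by
  rcases hab.lt_or_gt with hlt | hgt
  · have hnotMem : (a, b) ∉ inversions f S := by simp [inversions, hfa, hfb]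
    rw [inversions_stepPos_comp hf ha hb hlt hfa hfb, card_insert_of_notMem hnotMem, if_pos hlt]
    push_cast; ring
  · -- Undoing the crossing on `stepPos i ∘ f` adds the inversion `(b, a)`.
    have hback := inversions_stepPos_comp (i := i) ((stepPos_injective i).comp_injOn hf) hb ha hgt
      (by simp [hfb]) (by simp [hfa])
    have hnotMem : (b, a) ∉ inversions (stepPos i ∘ f) S := by simp [inversions, hfa, hfb]
    rw [← Function.comp_assoc, Function.LeftInverse.comp_eq_id (stepPos_stepPos i),
      Function.id_comp] at hback
    rw [hback, card_insert_of_notMem hnotMem, if_neg hgt.not_gt]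
    push_cast; ring

end StepPos

section PosAt

variable {n : ℕ} {w : List ℕ}

lemma posAt_zero (w : List ℕ) : posAt w 0 = id := rfl

lemma posAt_succ {k : ℕ} (hk : k < w.length) :
    posAt w (k + 1) = stepPos (w.getD k 0) ∘ posAt w k := by
  ext j
  simp only [posAt, List.take_add_one, List.foldl_append, List.getElem?_eq_getElem hk,
    Option.toList_some, List.foldl_cons, List.foldl_nil, List.getD_eq_getElem _ _ hk,
    Function.comp_apply]

lemma posAt_injective (w : List ℕ) (k : ℕ) : Function.Injective (posAt w k) := by
  unfold posAt
  induction w.take k with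
  | nil => exact Function.injective_id
  | cons i l ih => exact ih.comp (stepPos_injective i)

lemma posAt_mapsTo (hw : ∀ i ∈ w, 1 ≤ i ∧ i ≤ n - 1) (k : ℕ) :
    Set.MapsTo (posAt w k) (Set.Icc 1 n) (Set.Icc 1 n) := by
  have htake : ∀ i ∈ w.take k, 1 ≤ i ∧ i ≤ n - 1 := fun i hi => hw i (List.mem_of_mem_take hi)
  unfold posAt
  generalize w.take k = l at htake
  induction l with
  | nil => exact Set.mapsTo_id _
  | cons i l ih =>
    exact (ih fun j hj => htake j (List.mem_cons_of_mem i hj)).comp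
      (stepPos_mapsTo (htake i List.mem_cons_self))

lemma image_posAt_Icc (hw : ∀ i ∈ w, 1 ≤ i ∧ i ≤ n - 1) (k : ℕ) :
    (Icc 1 n).image (posAt w k) = Icc 1 n :=
  eq_of_subset_of_card_le (image_subset_iff.2 fun _ hj => by
      simpa using posAt_mapsTo hw k (by simpa using hj))
    (card_image_of_injective _ (posAt_injective w k)).ge

end PosAt

section Closure

variable {n : ℕ} {w : List ℕ}

lemma strandStart_injOn (hknot : (range n).image (strandStart w) = Icc 1 n) :
    Set.InjOn (strandStart w) (range n) :=
  injOn_of_card_image_eq (by rw [hknot, Nat.card_Icc, card_range, Nat.add_sub_cancel])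

lemma strandStart_mem_Icc (hknot : (range n).image (strandStart w) = Icc 1 n) {t : ℕ}
    (ht : t < n) : strandStart w t ∈ Icc 1 n :=
  hknot ▸ mem_image_of_mem _ (mem_range.2 ht)

lemma strandStart_zero_lt (hknot : (range n).image (strandStart w) = Icc 1 n) {t : ℕ}
    (ht : t ∈ Ico 1 n) : strandStart w 0 < strandStart w t := by
  obtain ⟨ht₁, htn⟩ := mem_Ico.1 ht
  have hne : strandStart w t ≠ strandStart w 0 := fun h =>
    absurd (strandStart_injOn hknot (mem_range.2 htn) (mem_range.2 (by omega)) h) (by omega)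
  have h₀ : strandStart w 0 = 1 := rfl
  have := (mem_Icc.1 (strandStart_mem_Icc hknot htn)).1
  omega

lemma strandStart_succ (w : List ℕ) (t : ℕ) :
    strandStart w (t + 1) = posAt w w.length (strandStart w t) :=
  Function.iterate_succ_apply' _ t 1

lemma strandStart_eq_strandStart_zero (hw : ∀ i ∈ w, 1 ≤ i ∧ i ≤ n - 1)
    (hknot : (range n).image (strandStart w) = Icc 1 n) : strandStart w n = strandStart w 0 := by
  obtain _ | m := n
  · rfl
  have hmem : strandStart w (m + 1) ∈ Icc 1 (m + 1) := by
    rw [strandStart_succ]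
    simpa using posAt_mapsTo hw _ (by simpa using strandStart_mem_Icc hknot (Nat.lt_succ_self m))
  rw [← hknot] at hmem
  obtain ⟨t, ht, hst⟩ := mem_image.1 hmem
  rw [mem_range] at ht
  -- `posAt w w.length` is injective, so an earlier return to the orbit is a return to its start.
  have hret : strandStart w (m + 1 - t) = strandStart w 0 :=
    Function.iterate_cancel (posAt_injective w w.length) hst.symm
  obtain rfl | ht₀ := t.eq_zero_or_pos
  · exact hst.symm
  · have := strandStart_injOn hknot (mem_range.2 (by omega)) (by simp) hret
    omega

end Closure

section Crossing

variable {n : ℕ} {w : List ℕ}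

lemma injOn_posAt_comp_strandStart (hknot : (range n).image (strandStart w) = Icc 1 n)
    (k : ℕ) : Set.InjOn (posAt w k ∘ strandStart w) (range n) :=
  (posAt_injective w k).comp_injOn (strandStart_injOn hknot)

lemma image_posAt_comp_strandStart (hw : ∀ i ∈ w, 1 ≤ i ∧ i ≤ n - 1)
    (hknot : (range n).image (strandStart w) = Icc 1 n) (k : ℕ) :
    (range n).image (posAt w k ∘ strandStart w) = Icc 1 n := by
  rw [← image_image, hknot, image_posAt_Icc hw]

lemma firstFromAbove_iff (hknot : (range n).image (strandStart w) = Icc 1 n) {k a b : ℕ}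
    (ha : a ∈ range n) (hb : b ∈ range n) (hfa : posAt w k (strandStart w a) = w.getD k 0)
    (hfb : posAt w k (strandStart w b) = w.getD k 0 + 1) :
    firstFromAbove w n k ↔ a < b := by
  have hinj := injOn_posAt_comp_strandStart hknot k
  constructor
  · rintro ⟨t, t', ht, ht', hft, hft', hlt⟩
    rwa [← hinj (mem_range.2 ht) ha (hft.trans hfa.symm),
      ← hinj (mem_range.2 ht') hb (hft'.trans hfb.symm)]
  · exact fun hab => ⟨a, b, mem_range.1 ha, mem_range.1 hb, hfa, hfb, hab⟩

open scoped Classical in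
lemma card_inversions_posAt_succ (hw : ∀ i ∈ w, 1 ≤ i ∧ i ≤ n - 1)
    (hknot : (range n).image (strandStart w) = Icc 1 n) {k : ℕ} (hk : k < w.length) :
    (#(inversions (posAt w (k + 1) ∘ strandStart w) (range n)) : ℤ) =
      #(inversions (posAt w k ∘ strandStart w) (range n)) +
        if firstFromAbove w n k then 1 else -1 := by
  have hi : 1 ≤ w.getD k 0 ∧ w.getD k 0 ≤ n - 1 :=
    hw _ (by rw [List.getD_eq_getElem _ _ hk]; exact List.getElem_mem hk)
  have himage := image_posAt_comp_strandStart hw hknot k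
  obtain ⟨a, ha, hfa⟩ := mem_image.1 (himage ▸ mem_Icc.2 (by omega) : w.getD k 0 ∈ _)
  obtain ⟨b, hb, hfb⟩ := mem_image.1 (himage ▸ mem_Icc.2 (by omega) : w.getD k 0 + 1 ∈ _)
  have hab : a ≠ b := by rintro rfl; omega
  rw [posAt_succ hk, Function.comp_assoc,
    card_inversions_stepPos_comp (injOn_posAt_comp_strandStart hknot k) ha hb hab hfa hfb]
  simp only [firstFromAbove_iff hknot ha hb hfa hfb]

end Crossing

lemma sub_eq_card_filter_sub_card_filter {φ : ℕ → ℤ} {p : ℕ → Prop} [DecidablePred p]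
    {m : ℕ} (hφ : ∀ k < m, φ (k + 1) = φ k + if p k then 1 else -1) :
    φ m - φ 0 = #{k ∈ range m | p k} - #{k ∈ range m | ¬p k} := by
  rw [← sum_range_sub,
    sum_congr rfl fun k hk => by rw [hφ k (mem_range.1 hk), add_sub_cancel_left], sum_ite, sum_const, sum_const]
  simp [sub_eq_add_neg]

lemma ncard_setOf_lt_and (m : ℕ) (p : ℕ → Prop) [DecidablePred p] :
    {k | k < m ∧ p k}.ncard = #{k ∈ range m | p k} := by
  rw [← Set.ncard_coe_finset, coe_filter]
  simp

theorem positive_braid_above_minus_below_general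
    (n : ℕ) (w : List ℕ)
    (hw : ∀ i ∈ w, 1 ≤ i ∧ i ≤ n - 1)
    (hknot : (Finset.range n).image (strandStart w) = Finset.Icc 1 n) :
    {k | k < w.length ∧ firstFromAbove w n k}.ncard
      = {k | k < w.length ∧ ¬ firstFromAbove w n k}.ncard + (n - 1) := by
  classical
  have hcount := sub_eq_card_filter_sub_card_filter (m := w.length) (p := firstFromAbove w n)
    (φ := fun k => #(inversions (posAt w k ∘ strandStart w) (range n)))
    fun k hk => card_inversions_posAt_succ hw hknot hk
  have hend : posAt w w.length ∘ strandStart w = strandStart w ∘ (· + 1) :=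
    funext fun t => (strandStart_succ w t).symm
  have hrotate := card_inversions_rotate (strandStart_eq_strandStart_zero hw hknot)
    fun _ => strandStart_zero_lt hknot
  simp only [hend, posAt_zero, Function.id_comp] at hcount
  rw [ncard_setOf_lt_and, ncard_setOf_lt_and]
  omega

/-- Lemma 2.1: for a standard positive braid diagram on `n` strands whose
closure is a knot, running the roller-coaster algorithm from the top-left
point, the number of crossings first encountered from above exceeds the
number first encountered from below by `n - 1`. -/
theorem positive_braid_above_minus_below
    (n : ℕ) (hn : 2 ≤ n) (w : List ℕ)
    (hw : ∀ i ∈ w, 1 ≤ i ∧ i ≤ n - 1)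
    (hknot : (Finset.range n).image (strandStart w) = Finset.Icc 1 n) :
    {k | k < w.length ∧ firstFromAbove w n k}.ncard
      = {k | k < w.length ∧ ¬ firstFromAbove w n k}.ncard + (n - 1) :=
  positive_braid_above_minus_below_general n w hw hknot
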